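/- arXiv:2402.11043 — 2 statements merged into one kernel-verified Lean document; each statement's English description precedes it below -/
import Mathlib

section
/- If the interpolation function λ satisfies assumption (Λ3), then it also satisfies assumption (Λ2), and moreover there is a constant C > 0 such that for all u, v ∈ ℝ³ one has |λ(|u|)u − λ(|v|)v| ≤ C|u−v|^{1/2}, where by convention λ(|u|)u := 0 if u = 0. -/
open MeasureTheory Real Set Filter Metric
open scoped ENNReal Topology RealInnerProductSpace

noncomputable section

/-- Position (or velocity) space `ℝ³`. -/
abbrev E3 := EuclideanSpace ℝ (Fin 3)

/-- Phase space `ℝ³ × ℝ³`. -/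
abbrev E6 := E3 × E3

/-- Assumption (Λ1): there is `Λ₁ > 0` with `λ(σ) ≥ Λ₁/√σ` for all sufficiently small `σ > 0`. -/
def Lambda1 (lam : ℝ → ℝ) : Prop :=
  ∃ Λ₁ > (0:ℝ), ∃ σ₀ > (0:ℝ), ∀ σ : ℝ, 0 < σ → σ < σ₀ → Λ₁ / Real.sqrt σ ≤ lam σ

/-- Assumption (Λ2): there is `Λ₂ > 0` with `λ(σ) ≤ Λ₂/√σ` for every `σ > 0`. -/
def Lambda2 (lam : ℝ → ℝ) : Prop :=
  ∃ Λ₂ > (0:ℝ), ∀ σ : ℝ, 0 < σ → lam σ ≤ Λ₂ / Real.sqrt σ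

/-- Assumption (Λ3): `λ ∈ C¹((0,∞))`, `λ(σ) → 0` as `σ → ∞`, and there is `Λ₂ > 0` with
`−Λ₂/(2σ^{3/2}) ≤ λ'(σ) ≤ 0` for all `σ > 0`. -/
def Lambda3 (lam : ℝ → ℝ) : Prop :=
  (∀ σ : ℝ, 0 < σ → DifferentiableAt ℝ lam σ) ∧
  ContinuousOn (deriv lam) (Set.Ioi (0:ℝ)) ∧
  Filter.Tendsto lam Filter.atTop (nhds 0) ∧
  ∃ Λ₂ > (0:ℝ), ∀ σ : ℝ, 0 < σ →
    -Λ₂ / (2 * σ ^ ((3:ℝ)/2)) ≤ deriv lam σ ∧ deriv lam σ ≤ 0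

/-- The vector field `u ↦ λ(|u|)u` (equal to `0` at `u = 0`). -/
def lamVec (lam : ℝ → ℝ) (u : E3) : E3 := lam ‖u‖ • u

/-- Gradient of the Newtonian potential, `∇U^N_ρ(x) = ∫ (x−y)/|x−y|³ ρ(y) dy`. -/
def gradUN (ρ : E3 → ℝ) (x : E3) : E3 := ∫ y : E3, (ρ y / ‖x - y‖ ^ 3) • (x - y)

/-- Newtonian potential `U^N_ρ(x) = −∫ ρ(y)/|x−y| dy`. -/
def UN (ρ : E3 → ℝ) (x : E3) : ℝ := -∫ y : E3, ρ y / ‖x - y‖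

/-- The kernel `(x−y)/|x−y|³ + y/|y|³` appearing in the definition of `U^λ_ρ`. -/
def kerQ (x y : E3) : E3 := (‖x - y‖ ^ 3)⁻¹ • (x - y) + (‖y‖ ^ 3)⁻¹ • y

/-- The Mondian part `U^λ_ρ` of the potential (QUMOND formulation). -/
def Ulam (lam : ℝ → ℝ) (ρ : E3 → ℝ) (x : E3) : ℝ :=
  (4 * π)⁻¹ * ∫ y : E3, ⟪lamVec lam (gradUN ρ y), kerQ x y⟫

/-- The Mondian potential `U^M_ρ = U^N_ρ + U^λ_ρ`. -/
def UM (lam : ℝ → ℝ) (ρ : E3 → ℝ) (x : E3) : ℝ := UN ρ x + Ulam lam ρ x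

/-- `Q(v) = ∫₀^v λ(w) w dw`. -/
def Qfun (lam : ℝ → ℝ) (v : ℝ) : ℝ := ∫ w in (0:ℝ)..v, lam w * w

/-- Spherical symmetry (a.e.) of a density on `ℝ³`. -/
def IsRadial (ρ : E3 → ℝ) : Prop :=
  ∀ A : E3 ≃ₗᵢ[ℝ] E3, ∀ᵐ x : E3, ρ (A x) = ρ x

/-- Spherical symmetry (a.e.) of a distribution function on phase space. -/
def IsRadial6 (f : E6 → ℝ) : Prop :=
  ∀ A : E3 ≃ₗᵢ[ℝ] E3, ∀ᵐ z : E6, f (A z.1, A z.2) = f z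

/-- Mass inside the ball of radius `r`. -/
def Mball (ρ : E3 → ℝ) (r : ℝ) : ℝ := ∫ y in Metric.closedBall (0:E3) r, ρ y

/-- Newtonian potential energy `E^N_pot(ρ) = −(1/8π) ∫ |∇U^N_ρ|² dx`. -/
def EpotN (ρ : E3 → ℝ) : ℝ := -(8 * π)⁻¹ * ∫ x : E3, ‖gradUN ρ x‖ ^ 2

/-- Mondian part of the potential energy, relative to the reference density `ρbar`. -/
def EpotQ (lam : ℝ → ℝ) (ρbar ρ : E3 → ℝ) : ℝ :=
  -(4 * π)⁻¹ * ∫ x : E3, (Qfun lam ‖gradUN ρ x‖ - Qfun lam ‖gradUN ρbar x‖)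

/-- Mondian potential energy. -/
def EpotM (lam : ℝ → ℝ) (ρbar ρ : E3 → ℝ) : ℝ := EpotN ρ + EpotQ lam ρbar ρ

/-- The reference density `ρ̄`: continuous, nonnegative, spherically symmetric, of mass `M`,
with support equal to the closed ball of radius `R̄ > 0`. -/
structure RefDensity (ρbar : E3 → ℝ) (M Rbar : ℝ) : Prop where
  cont : Continuous ρbar
  nonneg : ∀ x, 0 ≤ ρbar x
  radial : ∀ (A : E3 ≃ₗᵢ[ℝ] E3) (x : E3), ρbar (A x) = ρbar x
  mass : (∫ x : E3, ρbar x) = M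
  Rpos : 0 < Rbar
  supp : tsupport ρbar = Metric.closedBall 0 Rbar

/-- Assumptions on the ansatz function `Ψ`. -/
structure PsiHyp (Psi : ℝ → ℝ) (n : ℝ) : Prop where
  npos : 0 < n
  nlt3 : n < 3
  smooth : ContDiffOn ℝ 1 Psi (Set.Ici 0)
  zero : Psi 0 = 0
  dzero : derivWithin Psi (Set.Ici 0) 0 = 0
  convex : StrictConvexOn ℝ (Set.Ici 0) Psi
  growth : ∃ C > (0:ℝ), ∃ r₀ > (0:ℝ), ∀ r ≥ r₀, C * r ^ (1 + 1/n) ≤ Psi r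

/-- Assumptions on the ansatz function `Φ`. -/
structure PhiHyp (Phi : ℝ → ℝ) (k : ℝ) : Prop where
  kpos : 0 < k
  klt : k < 3/2
  smooth : ContDiffOn ℝ 1 Phi (Set.Ici 0)
  zero : Phi 0 = 0
  dzero : derivWithin Phi (Set.Ici 0) 0 = 0
  convex : StrictConvexOn ℝ (Set.Ici 0) Phi
  growth : ∃ C > (0:ℝ), ∃ s₀ > (0:ℝ), ∀ s ≥ s₀, C * s ^ (1 + 1/k) ≤ Phi s

/-- The constraint set `R_M`. -/
def RMset (lam Psi : ℝ → ℝ) (ρbar : E3 → ℝ) (M : ℝ) (ρ : E3 → ℝ) : Prop :=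
  MemLp ρ 1 volume ∧ IsRadial ρ ∧ (∀ᵐ x : E3, 0 ≤ ρ x) ∧ (∫ x : E3, ρ x) = M ∧
  Integrable (fun x : E3 => Qfun lam ‖gradUN ρ x‖ - Qfun lam ‖gradUN ρbar x‖) volume ∧
  Integrable (fun x : E3 => Psi (ρ x)) volume

/-- The functional `H_E(ρ) = E^M_pot(ρ) + ∫ Ψ(ρ) dx`. -/
def HE (lam Psi : ℝ → ℝ) (ρbar : E3 → ℝ) (ρ : E3 → ℝ) : ℝ :=
  EpotM lam ρbar ρ + ∫ x : E3, Psi (ρ x)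

/-- The infimum of `H_E` over `R_M`. -/
def infHE (lam Psi : ℝ → ℝ) (ρbar : E3 → ℝ) (M : ℝ) : ℝ :=
  sInf ((HE lam Psi ρbar) '' {ρ | RMset lam Psi ρbar M ρ})

/-- A minimizing sequence of `H_E` in `R_M`. -/
def IsMinSeq (lam Psi : ℝ → ℝ) (ρbar : E3 → ℝ) (M : ℝ) (ρj : ℕ → E3 → ℝ) : Prop :=
  (∀ j, RMset lam Psi ρbar M (ρj j)) ∧
  Filter.Tendsto (fun j => HE lam Psi ρbar (ρj j)) Filter.atTop
    (nhds (infHE lam Psi ρbar M))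

/-- `ρ₀` is a minimizer of `H_E` over `R_M`. -/
def IsMinHE (lam Psi : ℝ → ℝ) (ρbar : E3 → ℝ) (M : ℝ) (ρ₀ : E3 → ℝ) : Prop :=
  RMset lam Psi ρbar M ρ₀ ∧ ∀ ρ, RMset lam Psi ρbar M ρ → HE lam Psi ρbar ρ₀ ≤ HE lam Psi ρbar ρ

/-- Spatial density induced by a distribution function. -/
def rhoOf (f : E6 → ℝ) (x : E3) : ℝ := ∫ v : E3, f (x, v)

/-- Kinetic energy of a distribution function. -/
def Ekin (f : E6 → ℝ) : ℝ := (1/2) * ∫ z : E6, ‖z.2‖ ^ 2 * f z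

/-- Casimir functional. -/
def Casimir (Phi : ℝ → ℝ) (f : E6 → ℝ) : ℝ := ∫ z : E6, Phi (f z)

/-- The functional `H_B(f) = E^M_pot(ρ_f) + E_kin(f) + C(f)`. -/
def HB (lam Phi : ℝ → ℝ) (ρbar : E3 → ℝ) (f : E6 → ℝ) : ℝ :=
  EpotM lam ρbar (rhoOf f) + Ekin f + Casimir Phi f

/-- The constraint set `F_M`. -/
def FMset (lam Phi : ℝ → ℝ) (ρbar : E3 → ℝ) (M : ℝ) (f : E6 → ℝ) : Prop :=
  MemLp f 1 volume ∧ IsRadial6 f ∧ (∀ᵐ z : E6, 0 ≤ f z) ∧ (∫ z : E6, f z) = M ∧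
  Integrable (fun x : E3 => Qfun lam ‖gradUN (rhoOf f) x‖ - Qfun lam ‖gradUN ρbar x‖) volume ∧
  Integrable (fun z : E6 => ‖z.2‖ ^ 2 * f z) volume ∧
  Integrable (fun z : E6 => Phi (f z)) volume

/-- `f₀` is a minimizer of `H_B` over `F_M`. -/
def IsMinHB (lam Phi : ℝ → ℝ) (ρbar : E3 → ℝ) (M : ℝ) (f₀ : E6 → ℝ) : Prop :=
  FMset lam Phi ρbar M f₀ ∧
  ∀ g, FMset lam Phi ρbar M g → HB lam Phi ρbar f₀ ≤ HB lam Phi ρbar g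

/-- The set `G_r` used to define the reduced ansatz function. -/
def GrSet (Phi : ℝ → ℝ) (r : ℝ) (g : E3 → ℝ) : Prop :=
  MemLp g 1 volume ∧ IsRadial g ∧ (∀ᵐ v : E3, 0 ≤ g v) ∧ (∫ v : E3, g v) = r ∧
  Integrable (fun v : E3 => (1/2) * ‖v‖ ^ 2 * g v + Phi (g v)) volume

/-- The reduced ansatz function `Ψ(r) = inf_{g ∈ G_r} ∫ ((1/2)|v|²g + Φ(g)) dv`. -/
def PsiRed (Phi : ℝ → ℝ) (r : ℝ) : ℝ :=
  sInf ((fun g : E3 → ℝ => ∫ v : E3, ((1/2) * ‖v‖ ^ 2 * g v + Phi (g v))) ''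
    {g | GrSet Phi r g})

/-- The local energy `E(x,v) = |v|²/2 + U^M_{ρ₀}(x)`. -/
def Eloc (lam : ℝ → ℝ) (ρ₀ : E3 → ℝ) (z : E6) : ℝ := ‖z.2‖ ^ 2 / 2 + UM lam ρ₀ z.1

/-- The distance functional `d(f,f₀)` in the collisionless situation. -/
def dB (lam Phi : ℝ → ℝ) (ρ₀ : E3 → ℝ) (f f₀ : E6 → ℝ) : ℝ :=
  ∫ z : E6, (Phi (f z) - Phi (f₀ z) + Eloc lam ρ₀ z * (f z - f₀ z))

/-- The distance functional `d(ρ,ρ₀)` in the fluid situation. -/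
def dE (lam Psi : ℝ → ℝ) (ρ₀ : E3 → ℝ) (ρ : E3 → ℝ) : ℝ :=
  ∫ x : E3, (Psi (ρ x) - Psi (ρ₀ x) + UM lam ρ₀ x * (ρ x - ρ₀ x))

/-- Total energy of a fluid state `(ρ,u)`. -/
def Efluid (lam Psi : ℝ → ℝ) (ρbar : E3 → ℝ) (ρ : E3 → ℝ) (u : E3 → E3) : ℝ :=
  EpotM lam ρbar ρ + (1/2) * ∫ x : E3, ‖u x‖ ^ 2 * ρ x + ∫ x : E3, Psi (ρ x)

/-
The lower bound on `λ'` says exactly that `g(σ) = λ(σ) - Λ₂/√σ` is nondecreasing; since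
`g → 0` at infinity, `g ≤ 0`, which is (Λ2), and for `0 < a ≤ b` it gives
`λ(a) - λ(b) ≤ Λ₂/√a - Λ₂/√b`. For the Hölder bound take `|v| ≤ |u|` and write
`λ(|u|)u - λ(|v|)v = λ(|u|)(u - v) + (λ(|u|) - λ(|v|))v`. When `|u - v| < |u|` each term is at most
`Λ₂|u - v|^{1/2}` by these two estimates; otherwise both `|λ(|u|)u|` and `|λ(|v|)v|` are at most
`Λ₂|u|^{1/2} ≤ Λ₂|u - v|^{1/2}`.
-/

lemma rpow_three_halves_eq_mul_sqrt {σ : ℝ} (hσ : 0 ≤ σ) : σ ^ ((3:ℝ)/2) = σ * √σ := by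
  rw [show (3:ℝ)/2 = 1 + 1/2 by norm_num, Real.rpow_add' hσ (by norm_num), Real.rpow_one,
    Real.sqrt_eq_rpow]

lemma hasDerivAt_const_div_sqrt (c : ℝ) {σ : ℝ} (hσ : 0 < σ) :
    HasDerivAt (fun τ => c / √τ) (-c / (2 * σ ^ ((3:ℝ)/2))) σ := by
  have hs : √σ ≠ 0 := (Real.sqrt_pos.mpr hσ).ne'
  refine ((hasDerivAt_const σ c).div (Real.hasDerivAt_sqrt hσ.ne') hs).congr_deriv ?_
  rw [rpow_three_halves_eq_mul_sqrt hσ.le, Real.sq_sqrt hσ.le]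
  field_simp
  ring

lemma monotoneOn_sub_const_div_sqrt {lam : ℝ → ℝ} {c : ℝ}
    (hd : ∀ σ : ℝ, 0 < σ → DifferentiableAt ℝ lam σ)
    (hb : ∀ σ : ℝ, 0 < σ → -c / (2 * σ ^ ((3:ℝ)/2)) ≤ deriv lam σ) :
    MonotoneOn (fun τ => lam τ - c / √τ) (Ioi 0) := by
  have hD : ∀ σ ∈ Ioi (0:ℝ), HasDerivAt (fun τ => lam τ - c / √τ)
      (deriv lam σ - -c / (2 * σ ^ ((3:ℝ)/2))) σ := fun σ hσ =>
    (hd σ hσ).hasDerivAt.sub (hasDerivAt_const_div_sqrt c hσ)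
  refine monotoneOn_of_deriv_nonneg (convex_Ioi 0)
    (fun σ hσ => (hD σ hσ).continuousAt.continuousWithinAt) ?_ ?_ <;> rw [interior_Ioi]
  · exact fun σ hσ => (hD σ hσ).differentiableAt.differentiableWithinAt
  · intro σ hσ
    rw [(hD σ hσ).deriv, sub_nonneg]
    exact hb σ hσ

lemma antitoneOn_Ioi_of_deriv_nonpos {f : ℝ → ℝ} (hd : ∀ σ : ℝ, 0 < σ → DifferentiableAt ℝ f σ)
    (hf' : ∀ σ : ℝ, 0 < σ → deriv f σ ≤ 0) : AntitoneOn f (Ioi 0) :=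
  antitoneOn_of_deriv_nonpos (convex_Ioi 0)
    (fun σ hσ => (hd σ hσ).continuousAt.continuousWithinAt)
    (by rw [interior_Ioi]; exact fun σ hσ => (hd σ hσ).differentiableWithinAt)
    (by rw [interior_Ioi]; exact hf')

lemma le_const_div_sqrt_of_monotoneOn {lam : ℝ → ℝ} {c : ℝ}
    (hg : MonotoneOn (fun τ => lam τ - c / √τ) (Ioi 0)) (hlim : Tendsto lam atTop (𝓝 0))
    {σ : ℝ} (hσ : 0 < σ) : lam σ ≤ c / √σ := by
  have hglim : Tendsto (fun τ => lam τ - c / √τ) atTop (𝓝 0) := by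
    simpa using hlim.sub (tendsto_const_nhds.div_atTop Real.tendsto_sqrt_atTop)
  have hge : ∀ᶠ τ in atTop, lam σ - c / √σ ≤ lam τ - c / √τ := by
    filter_upwards [eventually_ge_atTop σ] with τ hτ
    exact hg hσ (hσ.trans_le hτ) hτ
  linarith [ge_of_tendsto hglim hge]

lemma div_sqrt_mul_le_mul_sqrt {c d b : ℝ} (hc : 0 ≤ c) (hd : 0 ≤ d) (hdb : d ≤ b) :
    c / √b * d ≤ c * √d := by
  rcases hd.eq_or_lt with rfl | hd
  · simp
  have hb : 0 < √b := Real.sqrt_pos.mpr (hd.trans_le hdb)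
  rw [div_mul_eq_mul_div, div_le_iff₀ hb, mul_assoc]
  gcongr
  calc d = √d * √d := (Real.mul_self_sqrt hd.le).symm
    _ ≤ √d * √b := by gcongr

lemma sub_const_div_sqrt_mul_le {c a b : ℝ} (hc : 0 ≤ c) (ha : 0 < a) (hab : a ≤ b) :
    (c / √a - c / √b) * a ≤ c * √(b - a) := by
  obtain ⟨x, hx, rfl⟩ : ∃ x, 0 < x ∧ x ^ 2 = a := ⟨√a, Real.sqrt_pos.mpr ha, Real.sq_sqrt ha.le⟩
  obtain ⟨y, hy, rfl⟩ : ∃ y, 0 ≤ y ∧ y ^ 2 = b :=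
    ⟨√b, Real.sqrt_nonneg b, Real.sq_sqrt (ha.le.trans hab)⟩
  have hxy : x ≤ y := (pow_le_pow_iff_left₀ hx.le hy (by norm_num)).mp hab
  rw [Real.sqrt_sq hx.le, Real.sqrt_sq hy]
  have hyx : y - x ≤ √(y ^ 2 - x ^ 2) := Real.le_sqrt_of_sq_le (by nlinarith)
  have hy0 : 0 < y := hx.trans_le hxy
  calc (c / x - c / y) * x ^ 2 = c * (x * (y - x) / y) := by field_simp
    _ ≤ c * (y - x) := by gcongr; rw [div_le_iff₀ hy0]; nlinarith
    _ ≤ c * √(y ^ 2 - x ^ 2) := by gcongr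

section Holder

variable {E : Type*} [SeminormedAddCommGroup E] [NormedSpace ℝ E] {lam : ℝ → ℝ} {c : ℝ}

lemma norm_smul_self_le (h0 : ∀ σ : ℝ, 0 < σ → 0 ≤ lam σ)
    (hle : ∀ σ : ℝ, 0 < σ → lam σ ≤ c / √σ) (w : E) : ‖lam ‖w‖ • w‖ ≤ c * √‖w‖ := by
  rcases (norm_nonneg w).eq_or_lt with hw | hw
  · simp [norm_smul, ← hw]
  rw [norm_smul, Real.norm_of_nonneg (h0 _ hw), ← Real.div_sqrt, ← mul_div_assoc,
    mul_div_right_comm]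
  gcongr
  exact hle _ hw

lemma norm_smul_sub_smul_le_of_norm_le (hc : 0 ≤ c) (h0 : ∀ σ : ℝ, 0 < σ → 0 ≤ lam σ)
    (hle : ∀ σ : ℝ, 0 < σ → lam σ ≤ c / √σ) (hanti : AntitoneOn lam (Ioi 0))
    (hg : MonotoneOn (fun τ => lam τ - c / √τ) (Ioi 0)) {u v : E} (hvu : ‖v‖ ≤ ‖u‖) :
    ‖lam ‖u‖ • u - lam ‖v‖ • v‖ ≤ 2 * c * √‖u - v‖ := by
  rcases le_or_gt ‖u‖ ‖u - v‖ with hfar | hnear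
  · calc ‖lam ‖u‖ • u - lam ‖v‖ • v‖ ≤ c * √‖u‖ + c * √‖v‖ :=
          (norm_sub_le _ _).trans (add_le_add (norm_smul_self_le h0 hle u)
            (norm_smul_self_le h0 hle v))
      _ ≤ 2 * c * √‖u - v‖ := by
          have := Real.sqrt_le_sqrt hfar
          have := Real.sqrt_le_sqrt (hvu.trans hfar)
          nlinarith
  have hu : 0 < ‖u‖ := (norm_nonneg _).trans_lt hnear
  have hfirst : ‖lam ‖u‖ • (u - v)‖ ≤ c * √‖u - v‖ := by
    rw [norm_smul, Real.norm_of_nonneg (h0 _ hu)]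
    exact (mul_le_mul_of_nonneg_right (hle _ hu) (norm_nonneg _)).trans
      (div_sqrt_mul_le_mul_sqrt hc (norm_nonneg _) hnear.le)
  have hsecond : ‖(lam ‖u‖ - lam ‖v‖) • v‖ ≤ c * √‖u - v‖ := by
    rcases (norm_nonneg v).eq_or_lt with hv | hv
    · simpa [norm_smul, ← hv] using mul_nonneg hc (Real.sqrt_nonneg _)
    rw [norm_smul, Real.norm_of_nonpos (sub_nonpos.mpr (hanti hv hu hvu)), neg_sub]
    have hgap : lam ‖v‖ - lam ‖u‖ ≤ c / √‖v‖ - c / √‖u‖ := by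
      have := hg hv hu hvu; simp only at this; linarith
    calc (lam ‖v‖ - lam ‖u‖) * ‖v‖ ≤ (c / √‖v‖ - c / √‖u‖) * ‖v‖ := by gcongr
      _ ≤ c * √(‖u‖ - ‖v‖) := sub_const_div_sqrt_mul_le hc hv hvu
      _ ≤ c * √‖u - v‖ := by gcongr; exact norm_sub_norm_le u v
  calc ‖lam ‖u‖ • u - lam ‖v‖ • v‖
        = ‖lam ‖u‖ • (u - v) + (lam ‖u‖ - lam ‖v‖) • v‖ := by rw [smul_sub, sub_smul]; abel_nf
    _ ≤ 2 * c * √‖u - v‖ := (norm_add_le _ _).trans (by linarith)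

lemma norm_smul_sub_smul_le (hc : 0 ≤ c) (h0 : ∀ σ : ℝ, 0 < σ → 0 ≤ lam σ)
    (hle : ∀ σ : ℝ, 0 < σ → lam σ ≤ c / √σ) (hanti : AntitoneOn lam (Ioi 0))
    (hg : MonotoneOn (fun τ => lam τ - c / √τ) (Ioi 0)) (u v : E) :
    ‖lam ‖u‖ • u - lam ‖v‖ • v‖ ≤ 2 * c * √‖u - v‖ := by
  rcases le_total ‖v‖ ‖u‖ with hvu | huv
  · exact norm_smul_sub_smul_le_of_norm_le hc h0 hle hanti hg hvu
  · rw [norm_sub_rev, norm_sub_rev u]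
    exact norm_smul_sub_smul_le_of_norm_le hc h0 hle hanti hg huv

end Holder

theorem lambda3_implies_lambda2_and_holder_general
    (lam : ℝ → ℝ)
    (hlam_nonneg : ∀ σ : ℝ, 0 < σ → 0 ≤ lam σ)
    (h3 : Lambda3 lam) :
    Lambda2 lam ∧
    ∃ C > (0:ℝ), ∀ u v : E3,
      ‖lamVec lam u - lamVec lam v‖ ≤ C * ‖u - v‖ ^ ((1:ℝ)/2) := by
  obtain ⟨hd, -, hlim, c, hc, hb⟩ := h3
  have hg := monotoneOn_sub_const_div_sqrt hd fun σ hσ => (hb σ hσ).1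
  have hle : ∀ σ : ℝ, 0 < σ → lam σ ≤ c / √σ := fun σ =>
    le_const_div_sqrt_of_monotoneOn hg hlim
  have hanti := antitoneOn_Ioi_of_deriv_nonpos hd fun σ hσ => (hb σ hσ).2
  refine ⟨⟨c, hc, hle⟩, 2 * c, by positivity, fun u v => ?_⟩
  rw [← Real.sqrt_eq_rpow]
  exact norm_smul_sub_smul_le hc.le hlam_nonneg hle hanti hg u v

/-- (Λ3) implies (Λ2), and `u ↦ λ(|u|)u` is Hölder continuous with exponent 1/2. -/
theorem lambda3_implies_lambda2_and_holder
    (lam : ℝ → ℝ) (hlam_meas : Measurable lam)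
    (hlam_nonneg : ∀ σ : ℝ, 0 < σ → 0 ≤ lam σ)
    (h3 : Lambda3 lam) :
    Lambda2 lam ∧
    ∃ C > (0:ℝ), ∀ u v : E3,
      ‖lamVec lam u - lamVec lam v‖ ≤ C * ‖u - v‖ ^ ((1:ℝ)/2) :=
  lambda3_implies_lambda2_and_holder_general lam hlam_nonneg h3
end
end

section
/- Assume (Λ3). Then Q ∈ C¹([0,∞)) and there is a constant C > 0 such that for all u, v ∈ ℝ³ one has |Q(|u|) − Q(|v|) − λ(|v|)v · (u−v)| ≤ C|u−v|^{3/2}, where by convention λ(|v|)v := 0 if v = 0. -/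
open MeasureTheory Real Set Filter Metric
open scoped ENNReal Topology RealInnerProductSpace

noncomputable section

/-!
Write `g(w) = λ(w) w`, so that `Q' = g`. Since `λ' ≤ 0` and `λ → 0`, `λ ≥ 0`; since
`λ' ≥ -Λ₂/(2σ^{3/2}) = (Λ₂/√σ)'`, the function `λ - Λ₂/√·` is nondecreasing with limit `0`, so
`λ(σ) ≤ Λ₂/√σ`. Hence `|g(w)| ≤ Λ₂√w`, which makes `g` continuous at `0` and `Q ∈ C¹([0,∞))`,
and `|g'(w)| ≤ Λ₂/√w = (2Λ₂√w)'`, which makes `g` `½`-Hölder with constant `2Λ₂`. Integrating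
`g(w) - g(b)` over `[b, a]` gives `|Q(a) - Q(b) - g(b)(a - b)| ≤ 2Λ₂|a - b|^{3/2}`.

With `a = |u|`, `b = |v|`, the rest of the three-dimensional remainder is `λ(b)(ab - v·u)`, and
`p = ab - v·u` satisfies `0 ≤ p ≤ |u - v|²/2` and `p ≤ 2b|u - v|`, so `p ≤ √b |u - v|^{3/2}`;
the factor `λ(b) ≤ Λ₂/√b` absorbs the `√b`.
-/

theorem Real.rpow_three_div_two {x : ℝ} (hx : 0 ≤ x) : x ^ ((3:ℝ) / 2) = x * √x := by
  rw [show ((3:ℝ) / 2) = 1 + 1 / 2 by norm_num, Real.rpow_add' hx (by norm_num), Real.rpow_one,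
    Real.sqrt_eq_rpow]

theorem Real.sqrt_sub_sqrt_le {x y : ℝ} (hy : 0 ≤ y) (hyx : y ≤ x) : √x - √y ≤ √(x - y) := by
  have hx := Real.sq_sqrt (hy.trans hyx)
  have hy' := Real.sq_sqrt hy
  have hxy := Real.sq_sqrt (sub_nonneg.2 hyx)
  nlinarith [Real.sqrt_nonneg x, Real.sqrt_nonneg y, Real.sqrt_nonneg (x - y)]

theorem MonotoneOn.le_of_tendsto_atTop {f : ℝ → ℝ} {a l x : ℝ} (hf : MonotoneOn f (Ioi a))
    (hlim : Tendsto f atTop (𝓝 l)) (hx : a < x) : f x ≤ l :=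
  ge_of_tendsto hlim (eventually_atTop.2 ⟨x, fun _ hy => hf hx (hx.trans_le hy) hy⟩)

theorem abs_sub_le_sub_of_abs_hasDerivAt_le {f f' B B' : ℝ → ℝ} {a x y : ℝ}
    (hf : ContinuousOn f (Ici a)) (hB : ContinuousOn B (Ici a))
    (hf' : ∀ t, a < t → HasDerivAt f (f' t) t) (hB' : ∀ t, a < t → HasDerivAt B (B' t) t)
    (hle : ∀ t, a < t → |f' t| ≤ B' t) (hy : a ≤ y) (hyx : y ≤ x) :
    |f x - f y| ≤ B x - B y := by
  have mono : ∀ ε : ℝ, ε = 1 ∨ ε = -1 → MonotoneOn (fun t => B t - ε * f t) (Ici a) := by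
    intro ε hε
    refine monotoneOn_of_hasDerivWithinAt_nonneg (f' := fun t => B' t - ε * f' t) (convex_Ici a)
      (hB.sub (hf.const_smul ε)) (fun t ht => ?_) fun t ht => ?_
    all_goals rw [interior_Ici] at ht
    · exact ((hB' t ht).sub ((hf' t ht).const_mul ε)).hasDerivWithinAt
    · have := abs_le.1 (hle t ht)
      rcases hε with rfl | rfl <;> linarith
  have h₁ := mono 1 (Or.inl rfl) hy (hy.trans hyx) hyx
  have h₂ := mono (-1) (Or.inr rfl) hy (hy.trans hyx) hyx
  simp only at h₁ h₂
  rw [abs_le]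
  constructor <;> linarith

theorem contDiffOn_integral_Ici {f : ℝ → ℝ} {a : ℝ} (hf : ContinuousOn f (Ici a)) :
    ContDiffOn ℝ 1 (fun x => ∫ t in a..x, f t) (Ici a) := by
  set F : ℝ → ℝ := fun t => f (max t a)
  have hF : Continuous F :=
    hf.comp_continuous (continuous_id.max continuous_const) fun t => le_max_right t a
  have hcd : ContDiff ℝ 1 (fun x => ∫ t in a..x, F t) := by
    rw [contDiff_one_iff_deriv]
    exact ⟨fun x => (hF.integral_hasStrictDerivAt a x).hasDerivAt.differentiableAt,
      by simpa only [funext (hF.deriv_integral F a ·)] using hF⟩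
  refine hcd.contDiffOn.congr fun x hx => intervalIntegral.integral_congr fun t ht => ?_
  rw [uIcc_of_le (mem_Ici.1 hx)] at ht
  simp only [F, max_eq_left ht.1]

theorem abs_integral_sub_mul_le {g : ℝ → ℝ} {a b K : ℝ} (hg : IntervalIntegrable g volume b a)
    (hK : ∀ w ∈ uIcc b a, |g w - g b| ≤ K * √|a - b|) :
    |(∫ w in b..a, g w) - g b * (a - b)| ≤ K * |a - b| ^ ((3:ℝ) / 2) := by
  have hsplit : (∫ w in b..a, g w) - g b * (a - b) = ∫ w in b..a, (g w - g b) := by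
    rw [intervalIntegral.integral_sub hg intervalIntegrable_const, intervalIntegral.integral_const,
      smul_eq_mul, mul_comm]
  rw [hsplit, ← Real.norm_eq_abs]
  refine (intervalIntegral.norm_integral_le_of_norm_le_const fun w hw =>
    hK w (uIoc_subset_uIcc hw)).trans_eq ?_
  rw [Real.rpow_three_div_two (abs_nonneg _)]
  ring

theorem norm_mul_norm_sub_inner_le {F : Type*} [NormedAddCommGroup F] [InnerProductSpace ℝ F]
    (u v : F) : ‖u‖ * ‖v‖ - ⟪v, u⟫ ≤ √‖v‖ * ‖u - v‖ ^ ((3:ℝ) / 2) := by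
  set p := ‖u‖ * ‖v‖ - ⟪v, u⟫
  have hδ := norm_nonneg (u - v)
  have hp : 0 ≤ p := by linarith [real_inner_le_norm v u]
  have hp_sq : p ≤ ‖u - v‖ ^ 2 / 2 := by
    nlinarith [norm_sub_sq_real u v, real_inner_comm u v, abs_norm_sub_norm_le u v,
      sq_abs (‖u‖ - ‖v‖), sq_nonneg (‖u‖ - ‖v‖)]
  have hp_lin : p ≤ 2 * ‖v‖ * ‖u - v‖ := by
    have h₁ : -(‖v‖ * ‖u - v‖) ≤ ⟪v, u - v⟫ := (abs_le.1 (abs_real_inner_le_norm v (u - v))).1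
    rw [inner_sub_right, real_inner_self_eq_norm_sq] at h₁
    nlinarith [norm_le_norm_add_norm_sub' u v, norm_nonneg v, norm_sub_rev u v]
  have hR : √‖v‖ * ‖u - v‖ ^ ((3:ℝ) / 2) = √(‖v‖ * ‖u - v‖ ^ 3) := by
    rw [Real.sqrt_mul (norm_nonneg v), Real.sqrt_eq_rpow (_ ^ 3), ← Real.rpow_natCast,
      ← Real.rpow_mul hδ]
    norm_num
  rw [hR]
  refine Real.le_sqrt_of_sq_le ?_
  calc p ^ 2 = p * p := sq p
    _ ≤ ‖u - v‖ ^ 2 / 2 * (2 * ‖v‖ * ‖u - v‖) := mul_le_mul hp_sq hp_lin hp (by positivity)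
    _ = ‖v‖ * ‖u - v‖ ^ 3 := by ring

structure Lambda3Bound (lam : ℝ → ℝ) (Λ : ℝ) : Prop where
  differentiableAt : ∀ σ, 0 < σ → DifferentiableAt ℝ lam σ
  tendsto_atTop : Tendsto lam atTop (𝓝 0)
  le_deriv : ∀ σ, 0 < σ → -Λ / (2 * σ ^ ((3:ℝ) / 2)) ≤ deriv lam σ
  deriv_nonpos : ∀ σ, 0 < σ → deriv lam σ ≤ 0

theorem Lambda3.exists_bound {lam : ℝ → ℝ} (h : Lambda3 lam) : ∃ Λ > 0, Lambda3Bound lam Λ := by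
  obtain ⟨hdiff, -, htop, Λ, hΛ, hd⟩ := h
  exact ⟨Λ, hΛ, hdiff, htop, fun σ hσ => (hd σ hσ).1, fun σ hσ => (hd σ hσ).2⟩

namespace Lambda3Bound

variable {lam : ℝ → ℝ} {Λ : ℝ}

theorem continuousOn (h : Lambda3Bound lam Λ) : ContinuousOn lam (Ioi 0) :=
  fun σ hσ => (h.differentiableAt σ hσ).continuousAt.continuousWithinAt

theorem nonneg (h : Lambda3Bound lam Λ) {σ : ℝ} (hσ : 0 < σ) : 0 ≤ lam σ := by
  have hanti : AntitoneOn lam (Ioi 0) :=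
    antitoneOn_of_deriv_nonpos (convex_Ioi 0) h.continuousOn
      (fun t ht => (h.differentiableAt t (by rwa [interior_Ioi] at ht)).differentiableWithinAt)
      fun t ht => h.deriv_nonpos t (by rwa [interior_Ioi] at ht)
  simpa using hanti.neg.le_of_tendsto_atTop h.tendsto_atTop.neg hσ

theorem le_div_sqrt (h : Lambda3Bound lam Λ) {σ : ℝ} (hσ : 0 < σ) : lam σ ≤ Λ / √σ := by
  have hderiv : ∀ s, 0 < s → HasDerivAt (fun s => lam s - Λ / √s)
      (deriv lam s + Λ / (2 * s ^ ((3:ℝ) / 2))) s := by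
    intro s hs
    have hsqrt := (hasDerivAt_const s Λ).fun_div (Real.hasDerivAt_sqrt hs.ne')
      (Real.sqrt_ne_zero'.2 hs)
    refine ((h.differentiableAt s hs).hasDerivAt.sub hsqrt).congr_deriv ?_
    rw [Real.rpow_three_div_two hs.le]
    have hs2 := Real.sq_sqrt hs.le
    field_simp
    linear_combination -Λ * hs2
  have hmono : MonotoneOn (fun s => lam s - Λ / √s) (Ioi 0) := by
    refine monotoneOn_of_hasDerivWithinAt_nonneg (convex_Ioi 0)
      (fun s hs => (hderiv s hs).continuousAt.continuousWithinAt)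
      (fun s hs => (hderiv s (by rwa [interior_Ioi] at hs)).hasDerivWithinAt) fun s hs => ?_
    rw [interior_Ioi] at hs
    have := h.le_deriv s hs
    rw [neg_div] at this
    linarith
  have hlim : Tendsto (fun s => lam s - Λ / √s) atTop (𝓝 0) := by
    simpa using h.tendsto_atTop.sub (tendsto_const_nhds.div_atTop Real.tendsto_sqrt_atTop)
  simpa [sub_nonpos] using hmono.le_of_tendsto_atTop hlim hσ

theorem const_nonneg (h : Lambda3Bound lam Λ) : 0 ≤ Λ := by
  simpa using (h.nonneg one_pos).trans (h.le_div_sqrt one_pos)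

theorem abs_apply_mul_le (h : Lambda3Bound lam Λ) {w : ℝ} (hw : 0 ≤ w) :
    |lam w * w| ≤ Λ * √w := by
  rcases hw.eq_or_lt with rfl | hw
  · simp
  rw [abs_of_nonneg (mul_nonneg (h.nonneg hw) hw.le)]
  calc lam w * w ≤ Λ / √w * w := mul_le_mul_of_nonneg_right (h.le_div_sqrt hw) hw.le
    _ = Λ * √w := by rw [div_mul_eq_mul_div, mul_div_assoc, Real.div_sqrt]

theorem hasDerivAt_apply_mul (h : Lambda3Bound lam Λ) {w : ℝ} (hw : 0 < w) :
    HasDerivAt (fun w => lam w * w) (deriv lam w * w + lam w) w := by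
  simpa using (h.differentiableAt w hw).hasDerivAt.fun_mul (hasDerivAt_id' w)

theorem abs_deriv_apply_mul_le (h : Lambda3Bound lam Λ) {w : ℝ} (hw : 0 < w) :
    |deriv lam w * w + lam w| ≤ Λ / √w := by
  have hlow : -(Λ / √w) / 2 ≤ deriv lam w * w := by
    have := mul_le_mul_of_nonneg_right (h.le_deriv w hw) hw.le
    rw [Real.rpow_three_div_two hw.le] at this
    refine le_of_eq_of_le ?_ this
    have := (Real.sqrt_pos.2 hw).ne'
    field_simp
  have hup : deriv lam w * w ≤ 0 := mul_nonpos_of_nonpos_of_nonneg (h.deriv_nonpos w hw) hw.le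
  have hΛ : 0 ≤ Λ / √w := (h.nonneg hw).trans (h.le_div_sqrt hw)
  rw [abs_le]
  constructor
  · linarith [h.nonneg hw]
  · linarith [h.le_div_sqrt hw]

theorem continuousOn_apply_mul (h : Lambda3Bound lam Λ) :
    ContinuousOn (fun w => lam w * w) (Ici 0) := by
  intro w hw
  rcases (mem_Ici.1 hw).eq_or_lt with rfl | hw
  · have hlim : Tendsto (fun w => Λ * √w) (𝓝[Ici 0] 0) (𝓝 0) :=
      ((by fun_prop : Continuous fun w => Λ * √w).tendsto' 0 0 (by simp)).mono_left
        nhdsWithin_le_nhds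
    change Tendsto _ _ (𝓝 (lam 0 * 0))
    rw [mul_zero]
    refine squeeze_zero_norm' ?_ hlim
    filter_upwards [self_mem_nhdsWithin] with w hw
    simpa using h.abs_apply_mul_le hw
  · exact (h.hasDerivAt_apply_mul hw).continuousAt.continuousWithinAt

theorem abs_apply_mul_sub_le (h : Lambda3Bound lam Λ) {x y : ℝ} (hx : 0 ≤ x) (hy : 0 ≤ y) :
    |lam x * x - lam y * y| ≤ 2 * Λ * √|x - y| := by
  wlog hyx : y ≤ x generalizing x y
  · rw [abs_sub_comm, abs_sub_comm x]
    exact this hy hx (le_of_not_ge hyx)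
  have hB : ∀ t, 0 < t → HasDerivAt (fun t => 2 * Λ * √t) (Λ / √t) t := fun t ht =>
    ((Real.hasDerivAt_sqrt ht.ne').const_mul (2 * Λ)).congr_deriv (by field_simp)
  have := abs_sub_le_sub_of_abs_hasDerivAt_le h.continuousOn_apply_mul
    (by fun_prop : Continuous fun t => 2 * Λ * √t).continuousOn
    (fun t ht => h.hasDerivAt_apply_mul ht) hB (fun t ht => h.abs_deriv_apply_mul_le ht) hy hyx
  calc |lam x * x - lam y * y| ≤ 2 * Λ * (√x - √y) := by linarith
    _ ≤ 2 * Λ * √|x - y| := by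
      rw [abs_of_nonneg (sub_nonneg.2 hyx)]
      exact mul_le_mul_of_nonneg_left (Real.sqrt_sub_sqrt_le hy hyx) (by linarith [h.const_nonneg])

theorem contDiffOn_Qfun (h : Lambda3Bound lam Λ) : ContDiffOn ℝ 1 (Qfun lam) (Ici 0) :=
  contDiffOn_integral_Ici h.continuousOn_apply_mul

theorem abs_Qfun_sub_sub_le (h : Lambda3Bound lam Λ) {a b : ℝ} (ha : 0 ≤ a) (hb : 0 ≤ b) :
    |Qfun lam a - Qfun lam b - lam b * b * (a - b)| ≤ 2 * Λ * |a - b| ^ ((3:ℝ) / 2) := by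
  have hint : ∀ x, 0 ≤ x → IntervalIntegrable (fun w => lam w * w) volume 0 x := fun x hx =>
    (h.continuousOn_apply_mul.mono (uIcc_of_le hx ▸ Icc_subset_Ici_self)).intervalIntegrable
  unfold Qfun
  rw [intervalIntegral.integral_interval_sub_left (hint a ha) (hint b hb)]
  refine abs_integral_sub_mul_le ((hint b hb).symm.trans (hint a ha)) fun w hw => ?_
  have hw0 : 0 ≤ w := (le_min hb ha).trans hw.1
  exact (h.abs_apply_mul_sub_le hw0 hb).trans (mul_le_mul_of_nonneg_left
    (Real.sqrt_le_sqrt (abs_sub_left_of_mem_uIcc hw)) (by linarith [h.const_nonneg]))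

theorem abs_mul_norm_mul_norm_sub_inner_le {F : Type*} [NormedAddCommGroup F]
    [InnerProductSpace ℝ F] (h : Lambda3Bound lam Λ) (u v : F) :
    |lam ‖v‖ * (‖u‖ * ‖v‖ - ⟪v, u⟫)| ≤ Λ * ‖u - v‖ ^ ((3:ℝ) / 2) := by
  rcases (norm_nonneg v).eq_or_lt with hv | hv
  · simp only [norm_eq_zero.1 hv.symm, norm_zero, inner_zero_left, mul_zero, sub_zero, abs_zero]
    exact mul_nonneg h.const_nonneg (by positivity)
  have hp : 0 ≤ ‖u‖ * ‖v‖ - ⟪v, u⟫ := by linarith [real_inner_le_norm v u]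
  rw [abs_of_nonneg (mul_nonneg (h.nonneg hv) hp)]
  calc lam ‖v‖ * (‖u‖ * ‖v‖ - ⟪v, u⟫)
      ≤ Λ / √‖v‖ * (√‖v‖ * ‖u - v‖ ^ ((3:ℝ) / 2)) :=
        mul_le_mul (h.le_div_sqrt hv) (norm_mul_norm_sub_inner_le u v) hp
          ((h.nonneg hv).trans (h.le_div_sqrt hv))
    _ = Λ * ‖u - v‖ ^ ((3:ℝ) / 2) := by
      have := (Real.sqrt_pos.2 hv).ne'
      field_simp

end Lambda3Bound

theorem Qfun_differentiable_general
    (lam : ℝ → ℝ)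
    (h3 : Lambda3 lam) :
    ContDiffOn ℝ 1 (Qfun lam) (Set.Ici 0) ∧
    ∃ C > (0:ℝ), ∀ u v : E3,
      |Qfun lam ‖u‖ - Qfun lam ‖v‖ - ⟪lamVec lam v, u - v⟫| ≤ C * ‖u - v‖ ^ ((3:ℝ)/2) := by
  obtain ⟨Λ, hΛ, h⟩ := h3.exists_bound
  refine ⟨h.contDiffOn_Qfun, 3 * Λ, by positivity, fun u v => ?_⟩
  have hsplit : Qfun lam ‖u‖ - Qfun lam ‖v‖ - ⟪lamVec lam v, u - v⟫ =
      (Qfun lam ‖u‖ - Qfun lam ‖v‖ - lam ‖v‖ * ‖v‖ * (‖u‖ - ‖v‖)) +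
        lam ‖v‖ * (‖u‖ * ‖v‖ - ⟪v, u⟫) := by
    rw [lamVec, real_inner_smul_left, inner_sub_right, real_inner_self_eq_norm_sq]
    ring
  have hradial : |Qfun lam ‖u‖ - Qfun lam ‖v‖ - lam ‖v‖ * ‖v‖ * (‖u‖ - ‖v‖)| ≤
      2 * Λ * ‖u - v‖ ^ ((3:ℝ) / 2) :=
    (h.abs_Qfun_sub_sub_le (norm_nonneg u) (norm_nonneg v)).trans <|
      mul_le_mul_of_nonneg_left (Real.rpow_le_rpow (abs_nonneg _) (abs_norm_sub_norm_le u v)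
        (by norm_num)) (by positivity)
  calc |Qfun lam ‖u‖ - Qfun lam ‖v‖ - ⟪lamVec lam v, u - v⟫|
      ≤ 2 * Λ * ‖u - v‖ ^ ((3:ℝ) / 2) + Λ * ‖u - v‖ ^ ((3:ℝ) / 2) :=
        hsplit ▸ (abs_add_le _ _).trans
          (add_le_add hradial (h.abs_mul_norm_mul_norm_sub_inner_le u v))
    _ = 3 * Λ * ‖u - v‖ ^ ((3:ℝ) / 2) := by ring

/-- under (Λ3), `Q ∈ C¹([0,∞))` and a first order Taylor estimate holds. -/
theorem Qfun_differentiable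
    (lam : ℝ → ℝ) (hlam_meas : Measurable lam)
    (hlam_nonneg : ∀ σ : ℝ, 0 < σ → 0 ≤ lam σ)
    (h3 : Lambda3 lam) :
    ContDiffOn ℝ 1 (Qfun lam) (Set.Ici 0) ∧
    ∃ C > (0:ℝ), ∀ u v : E3,
      |Qfun lam ‖u‖ - Qfun lam ‖v‖ - ⟪lamVec lam v, u - v⟫| ≤ C * ‖u - v‖ ^ ((3:ℝ)/2) :=
  Qfun_differentiable_general lam h3
end
end
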